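/- arXiv:2508.11861 — 4 statements merged into one kernel-verified Lean document; each statement's English description precedes it below -/
import Mathlib

section
/- Let G : ℝ → ℝ be a cumulative distribution function supported on (0,∞) (i.e., G is monotone nondecreasing, right-continuous, G(x) → 0 as x → 0⁺ and G(x) → 1 as x → ∞), and let β > 0. Then the function F(x) = G(x) · exp(−(1 − G(x))^β) is also a cumulative distribution function supported on (0,∞): it is monotone nondecreasing, F(x) → 0 as x → 0⁺, and F(x) → 1 as x → ∞. -/
open Real Set Filter

theorem dtg_is_cdf (G : ℝ → ℝ) (β : ℝ) (hβ : 0 < β)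
    (hmono : Monotone G)
    (hrc : ∀ x : ℝ, ContinuousWithinAt G (Ici x) x)
    (h0 : Tendsto G (nhdsWithin 0 (Ioi 0)) (nhds 0))
    (h1 : Tendsto G atTop (nhds 1)) :
    MonotoneOn (fun x => G x * Real.exp (-(1 - G x) ^ β)) (Ioi 0) ∧
    Tendsto (fun x => G x * Real.exp (-(1 - G x) ^ β)) (nhdsWithin 0 (Ioi 0)) (nhds 0) ∧
    Tendsto (fun x => G x * Real.exp (-(1 - G x) ^ β)) atTop (nhds 1) := by
  -- G is bounded above by 1 everywhere
  have hle1 : ∀ x : ℝ, G x ≤ 1 := fun x =>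
    ge_of_tendsto h1 ((eventually_ge_atTop x).mono fun y hy => hmono hy)
  -- G is nonnegative on (0, ∞)
  have hge0 : ∀ x : ℝ, 0 < x → 0 ≤ G x := by
    intro x hx
    refine le_of_tendsto h0 ?_
    have hmem : Ioo (0:ℝ) x ∈ nhdsWithin (0:ℝ) (Ioi 0) :=
      Ioo_mem_nhdsGT_of_mem (by constructor <;> simp [hx])
    filter_upwards [hmem] with y hy
    exact hmono hy.2.le
  refine ⟨?_, ?_, ?_⟩
  · -- monotone
    intro x hx y hy hxy
    have hGx := hge0 x hx
    have hGy := hge0 y hy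
    have hr : (1 - G y) ^ β ≤ (1 - G x) ^ β :=
      Real.rpow_le_rpow (by linarith [hle1 y]) (by linarith [hmono hxy]) hβ.le
    have hexp : Real.exp (-(1 - G x) ^ β) ≤ Real.exp (-(1 - G y) ^ β) :=
      Real.exp_le_exp.2 (by linarith)
    exact mul_le_mul (hmono hxy) hexp (Real.exp_pos _).le hGy
  · -- limit at 0⁺
    have h1G : Tendsto (fun x => 1 - G x) (nhdsWithin 0 (Ioi 0)) (nhds 1) := by
      simpa using tendsto_const_nhds.sub h0
    have hrpow : Tendsto (fun x => (1 - G x) ^ β) (nhdsWithin 0 (Ioi 0))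
        (nhds ((1:ℝ) ^ β)) :=
      (Real.continuousAt_rpow_const 1 β (Or.inl one_ne_zero)).tendsto.comp h1G
    have hexp : Tendsto (fun x => Real.exp (-(1 - G x) ^ β)) (nhdsWithin 0 (Ioi 0))
        (nhds (Real.exp (-(1:ℝ) ^ β))) :=
      (Real.continuous_exp.tendsto _).comp hrpow.neg
    simpa using h0.mul hexp
  · -- limit at ∞
    have h1G : Tendsto (fun x => 1 - G x) atTop (nhds 0) := by
      simpa using (tendsto_const_nhds (x := (1:ℝ))).sub h1
    have hrpow : Tendsto (fun x => (1 - G x) ^ β) atTop (nhds ((0:ℝ) ^ β)) :=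
      (Real.continuousAt_rpow_const 0 β (Or.inr hβ.le)).tendsto.comp h1G
    rw [Real.zero_rpow hβ.ne'] at hrpow
    have hexp : Tendsto (fun x => Real.exp (-(1 - G x) ^ β)) atTop
        (nhds (Real.exp (-0))) :=
      (Real.continuous_exp.tendsto _).comp hrpow.neg
    simpa using h1.mul hexp
end

section
/- Let W be a Weibull(1,β) random variable with CDF F_W(w) = 1 − e^{−w^β} for w > 0 and density f_W(w) = β w^{β−1} e^{−w^β}. Then the function f_Y(y) = 1 − F_W(1−y) + y·f_W(1−y) for 0 < y < 1 is a probability density function on (0,1); that is, f_Y ≥ 0 on (0,1) and ∫₀¹ f_Y(y) dy = 1. -/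
/-! With `S(w) = exp (-w ^ β)` the Weibull survival function, `f_Y(y) = S(1 - y) + y f_W(1 - y)`
is the derivative of `y ↦ y S(1 - y)` on `(0, 1)`. It is nonnegative there, hence integrable, and the
fundamental theorem of calculus gives `∫₀¹ f_Y = 1 · S(0) - 0 · S(1) = 1`. -/

open Real Set intervalIntegral

noncomputable def weibullSurvival (β w : ℝ) : ℝ := exp (-(w ^ β))

noncomputable def weibullDensity (β w : ℝ) : ℝ := β * w ^ (β - 1) * exp (-(w ^ β))

section Weibull

variable {β w : ℝ}

theorem weibullDensity_nonneg (hβ : 0 ≤ β) (hw : 0 ≤ w) : 0 ≤ weibullDensity β w := by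
  unfold weibullDensity
  positivity

theorem weibullSurvival_zero (hβ : β ≠ 0) : weibullSurvival β 0 = 1 := by
  simp [weibullSurvival, zero_rpow hβ]

theorem continuous_weibullSurvival (hβ : 0 ≤ β) : Continuous (weibullSurvival β) :=
  continuous_exp.comp (continuous_rpow_const hβ).neg

theorem hasDerivAt_weibullSurvival (hw : 0 < w) :
    HasDerivAt (weibullSurvival β) (-weibullDensity β w) w := by
  have h : HasDerivAt (fun y => -y ^ β) (-(β * w ^ (β - 1))) w :=
    (hasDerivAt_rpow_const (Or.inl hw.ne')).neg
  exact h.exp.congr_deriv (by rw [weibullDensity]; ring)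

end Weibull

section ReflectedWeibull

variable {β : ℝ}

theorem hasDerivAt_mul_weibullSurvival_one_sub {x : ℝ} (hx : x < 1) :
    HasDerivAt (fun y => y * weibullSurvival β (1 - y))
      (weibullSurvival β (1 - x) + x * weibullDensity β (1 - x)) x := by
  have hS : HasDerivAt (fun y => weibullSurvival β (1 - y)) (weibullDensity β (1 - x)) x := by
    simpa using (hasDerivAt_weibullSurvival (β := β) (sub_pos.mpr hx)).comp_const_sub 1 x
  exact ((hasDerivAt_id' x).mul hS).congr_deriv (by rw [weibullSurvival]; ring)

theorem weibullSurvival_one_sub_add_mul_weibullDensity_nonneg (hβ : 0 ≤ β) {y : ℝ}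
    (hy : y ∈ Ioo (0:ℝ) 1) : 0 ≤ weibullSurvival β (1 - y) + y * weibullDensity β (1 - y) :=
  add_nonneg (exp_pos _).le
    (mul_nonneg hy.1.le (weibullDensity_nonneg hβ (sub_pos.mpr hy.2).le))

theorem integral_weibullSurvival_one_sub_add_mul_weibullDensity (hβ : 0 < β) :
    ∫ y in (0:ℝ)..1, (weibullSurvival β (1 - y) + y * weibullDensity β (1 - y)) = 1 := by
  have hcont : ContinuousOn (fun y => y * weibullSurvival β (1 - y)) (Icc 0 1) :=
    (continuous_id.mul ((continuous_weibullSurvival hβ.le).comp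
      (continuous_const.sub continuous_id))).continuousOn
  have hderiv : ∀ x ∈ Ioo (0:ℝ) 1, HasDerivAt (fun y => y * weibullSurvival β (1 - y))
      (weibullSurvival β (1 - x) + x * weibullDensity β (1 - x)) x :=
    fun x hx => hasDerivAt_mul_weibullSurvival_one_sub hx.2
  have hint : IntervalIntegrable
      (fun y => weibullSurvival β (1 - y) + y * weibullDensity β (1 - y)) MeasureTheory.volume 0 1 :=
    (intervalIntegrable_iff_integrableOn_Ioc_of_le (zero_le_one' ℝ)).mpr
      (integrableOn_deriv_of_nonneg hcont hderiv fun x hx =>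
        weibullSurvival_one_sub_add_mul_weibullDensity_nonneg hβ.le hx)
  rw [integral_eq_sub_of_hasDerivAt_of_le zero_le_one hcont hderiv hint]
  simp [weibullSurvival_zero hβ.ne']

end ReflectedWeibull

theorem fY_is_density (β : ℝ) (hβ : 0 < β)
    (F_W : ℝ → ℝ) (f_W : ℝ → ℝ)
    (hFW : ∀ w : ℝ, 0 < w → F_W w = 1 - Real.exp (-(w ^ β)))
    (hfW : ∀ w : ℝ, 0 < w → f_W w = β * w ^ (β - 1) * Real.exp (-(w ^ β))) :
    (∀ y ∈ Ioo (0:ℝ) 1, 0 ≤ 1 - F_W (1 - y) + y * f_W (1 - y)) ∧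
    (∫ y in (0:ℝ)..1, (1 - F_W (1 - y) + y * f_W (1 - y))) = 1 := by
  have hfY : ∀ y < 1, 1 - F_W (1 - y) + y * f_W (1 - y)
      = weibullSurvival β (1 - y) + y * weibullDensity β (1 - y) := fun y hy => by
    rw [hFW _ (sub_pos.mpr hy), hfW _ (sub_pos.mpr hy), weibullSurvival, weibullDensity]
    ring
  refine ⟨fun y hy => ?_, ?_⟩
  · rw [hfY y hy.2]
    exact weibullSurvival_one_sub_add_mul_weibullDensity_nonneg hβ.le hy
  · refine (integral_congr_ae ((MeasureTheory.volume.ae_ne 1).mono fun y hy1 hy => ?_)).trans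
      (integral_weibullSurvival_one_sub_add_mul_weibullDensity hβ)
    rw [uIoc_of_le zero_le_one] at hy
    exact hfY y (lt_of_le_of_ne hy.2 hy1)
end

section
/- Let μ > 0 and σ > 0, set λ = (σ + log 2)/μ and β = −(1/(σ + log 2)) · log( log( (1 − e^{−(σ+log 2)})/0.5 ) ). Then the DTED CDF F(x) = (1 − e^{−λx}) e^{−e^{−βλx}} satisfies F(μ) = 1/2; that is, μ is the median of the reparameterized DTED. -/
open Real Set

theorem rdted_median (μ σ : ℝ) (hμ : 0 < μ) (hσ : 0 < σ) :
    (1 - Real.exp (-((σ + Real.log 2) / μ) * μ)) *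
      Real.exp (-Real.exp (-(-(1 / (σ + Real.log 2)) *
        Real.log (Real.log ((1 - Real.exp (-(σ + Real.log 2))) / 0.5))) *
          ((σ + Real.log 2) / μ) * μ)) = 1 / 2 := by
  have h2 : (0:ℝ) < Real.log 2 := Real.log_pos (by norm_num)
  set t := σ + Real.log 2 with htdef
  have ht0 : 0 < t := by positivity
  have hμ' : μ ≠ 0 := ne_of_gt hμ
  have ht' : t ≠ 0 := ne_of_gt ht0
  have hexp : Real.exp (-t) < 1/2 := by
    rw [show (1:ℝ)/2 = Real.exp (-Real.log 2) by
      rw [Real.exp_neg, Real.exp_log] <;> norm_num]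
    exact Real.exp_lt_exp.mpr (by simp [htdef]; linarith)
  have hA : 0 < 1 - Real.exp (-t) := by linarith
  have hX : (0:ℝ) < (1 - Real.exp (-t)) / 0.5 := by positivity
  have hX1 : (1:ℝ) < (1 - Real.exp (-t)) / 0.5 := by
    rw [lt_div_iff₀ (by norm_num)]; linarith
  have hL : 0 < Real.log ((1 - Real.exp (-t)) / 0.5) := Real.log_pos hX1
  have e1 : -(t/μ)*μ = -t := by field_simp
  have e2 : -(-(1 / t) * Real.log (Real.log ((1 - Real.exp (-t)) / 0.5))) * (t/μ) * μ
      = Real.log (Real.log ((1 - Real.exp (-t)) / 0.5)) := by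
    field_simp
  rw [e1, e2, Real.exp_log hL, Real.exp_neg (Real.log ((1 - Real.exp (-t)) / 0.5)), Real.exp_log hX]
  field_simp
  ring
end

section
/- For σ > 0 and μ > 0, the RDTED CDF F(x) = (1 − exp(−(σ+log 2)x/μ)) · exp( − ( log( (1 − e^{−(σ+log 2)})/0.5 ) )^{x/μ} ) is strictly increasing in x on (0,∞). -/
open Real Set

theorem rdted_cdf_strictMono (μ σ : ℝ) (hμ : 0 < μ) (hσ : 0 < σ) :
    StrictMonoOn (fun x : ℝ =>
      (1 - Real.exp (-(σ + Real.log 2) * x / μ)) *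
        Real.exp (-(Real.log ((1 - Real.exp (-(σ + Real.log 2))) / 0.5)) ^ (x / μ)))
      (Ioi 0) := by
  set a := σ + Real.log 2 with ha
  have hlog2 : 0 < Real.log 2 := Real.log_pos (by norm_num)
  have ha0 : 0 < a := by positivity
  have hea : Real.exp (-a) < 1/2 := by
    calc Real.exp (-a) < Real.exp (-(Real.log 2)) :=
          Real.exp_lt_exp.2 (by simp [ha]; linarith)
      _ = 1/2 := by
          rw [Real.exp_neg, Real.exp_log (by norm_num : (0:ℝ) < 2)]
          norm_num
  set c := Real.log ((1 - Real.exp (-a)) / 0.5) with hc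
  have hc0 : 0 < c := Real.log_pos (by rw [lt_div_iff₀ (by norm_num)]; linarith)
  have hc1 : c < 1 := by
    have h2 : (1 - Real.exp (-a)) / 0.5 < 2 := by
      rw [div_lt_iff₀ (by norm_num)]
      have := Real.exp_pos (-a); linarith
    calc c < Real.log 2 := Real.log_lt_log (by
            rw [lt_div_iff₀ (by norm_num)]; linarith) h2
      _ < 1 := by linarith [Real.log_two_lt_d9]
  intro x hx y hy hxy
  simp only [mem_Ioi] at hx hy
  have hdiv : x / μ < y / μ := by gcongr
  have hf : 1 - Real.exp (-a * x / μ) < 1 - Real.exp (-a * y / μ) := by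
    have : Real.exp (-a * y / μ) < Real.exp (-a * x / μ) := by
      apply Real.exp_lt_exp.2
      rw [div_lt_div_iff₀ hμ hμ]
      nlinarith [mul_pos (mul_pos ha0 (sub_pos.2 hxy)) hμ]
    linarith
  have hfpos : 0 < 1 - Real.exp (-a * x / μ) := by
    have : Real.exp (-a * x / μ) < 1 := by
      rw [Real.exp_lt_one_iff]
      have h3 : 0 < a * x / μ := by positivity
      have h4 : -a * x / μ = -(a * x / μ) := by ring
      rw [h4]; linarith
    linarith
  have hg : Real.exp (-c ^ (x / μ)) < Real.exp (-c ^ (y / μ)) := by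
    apply Real.exp_lt_exp.2
    have := Real.rpow_lt_rpow_of_exponent_gt hc0 hc1 hdiv
    linarith
  exact mul_lt_mul'' hf hg hfpos.le (Real.exp_pos _).le
end
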